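/- Let α ∈ (0,1), E a convex set of PMFs on finite X, R a PMF. If a Q ∈ E with L_α(Q,R) < ∞ satisfies L_α(P,R) ≥ L_α(P,Q) + L_α(Q,R) for all P ∈ E, then Q is the unique minimizer of L_α(·,R) over E; conversely every minimizer satisfies this inequality for all P ∈ E. -/

import Mathlib

open Real Finset

/-- A probability mass function on a finite set. -/
def IsPMF {X : Type*} [Fintype X] (p : X → ℝ) : Prop :=
  (∀ x, 0 ≤ p x) ∧ ∑ x, p x = 1

/-- The Rényi entropy of order `α` of a PMF `P`. -/
noncomputable def renyiH {X : Type*} [Fintype X] (α : ℝ) (P : X → ℝ) : ℝ :=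
  (1 / (1 - α)) * Real.log (∑ x, P x ^ α)

/-- The finite part of the divergence quantity `L_α(P,Q)`. -/
noncomputable def Lalpha {X : Type*} [Fintype X] (α : ℝ) (P Q : X → ℝ) : ℝ :=
  (α / (1 - α)) * Real.log (∑ x, P x * (∑ a, (Q a / Q x) ^ α) ^ ((1 - α) / α))
    - renyiH α P

open Classical in
/-- `L_α(P,Q)` as an extended real, equal to `+∞` when `supp P ⊄ supp Q`. -/
noncomputable def Lext {X : Type*} [Fintype X] (α : ℝ) (P Q : X → ℝ) : EReal :=
  if ∀ x, Q x = 0 → P x = 0 then ((Lalpha α P Q : ℝ) : EReal) else ⊤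

section Aux

variable {X : Type*} [Fintype X] {α : ℝ} {P Q R : X → ℝ}

lemma exists_pos (hP : IsPMF P) : ∃ x, 0 < P x := by
  by_contra h
  push_neg at h
  have : ∑ x, P x ≤ 0 := Finset.sum_nonpos fun x _ => h x
  rw [hP.2] at this; linarith

lemma sum_rpow_pos (hα : 0 < α) (hP : IsPMF P) : 0 < ∑ x, P x ^ α := by
  obtain ⟨x₀, hx₀⟩ := exists_pos hP
  have h1 : ∀ x ∈ Finset.univ, (0:ℝ) ≤ P x ^ α := fun x _ => Real.rpow_nonneg (hP.1 x) α
  have h2 : (0:ℝ) < P x₀ ^ α := Real.rpow_pos_of_pos hx₀ α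
  calc (0:ℝ) < P x₀ ^ α := h2
    _ ≤ ∑ x, P x ^ α := Finset.single_le_sum h1 (Finset.mem_univ x₀)

lemma F_nonneg (hP : ∀ x, 0 ≤ P x) (hQ : ∀ x, 0 ≤ Q x) :
    0 ≤ ∑ x, P x * Q x ^ (α - 1) :=
  Finset.sum_nonneg fun x _ => mul_nonneg (hP x) (Real.rpow_nonneg (hQ x) _)

lemma F_pos (hP : IsPMF P) (hQ : ∀ x, 0 ≤ Q x) (hPQ : ∀ x, Q x = 0 → P x = 0) :
    0 < ∑ x, P x * Q x ^ (α - 1) := by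
  obtain ⟨x₀, hx₀⟩ := exists_pos hP
  have hQx₀ : 0 < Q x₀ := by
    rcases (hQ x₀).lt_or_eq with h | h
    · exact h
    · exact absurd (hPQ x₀ h.symm) hx₀.ne'
  have h2 : (0:ℝ) < P x₀ * Q x₀ ^ (α - 1) :=
    mul_pos hx₀ (Real.rpow_pos_of_pos hQx₀ _)
  exact lt_of_lt_of_le h2 <| Finset.single_le_sum
    (fun x _ => mul_nonneg (hP.1 x) (Real.rpow_nonneg (hQ x) _)) (Finset.mem_univ x₀)

lemma inner_sum_eq (hα : 0 < α ∧ α < 1) (hQ : ∀ a, 0 ≤ Q a) (x : X) :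
    P x * (∑ a, (Q a / Q x) ^ α) ^ ((1 - α) / α)
      = (∑ a, Q a ^ α) ^ ((1 - α) / α) * (P x * Q x ^ (α - 1)) := by
  have hαne : α ≠ 0 := hα.1.ne'
  have hene : (1 - α) / α ≠ 0 := by
    apply div_ne_zero (by linarith [hα.2]) hαne
  rcases (hQ x).lt_or_eq with hx | hx
  · have h1 : ∀ a, (Q a / Q x) ^ α = Q a ^ α / Q x ^ α := fun a =>
      Real.div_rpow (hQ a) (hQ x) α
    simp only [h1, ← Finset.sum_div]
    rw [Real.div_rpow (Finset.sum_nonneg fun a _ => Real.rpow_nonneg (hQ a) α)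
      (Real.rpow_nonneg (hQ x) α), ← Real.rpow_mul (hQ x)]
    have he : α * ((1 - α) / α) = 1 - α := by field_simp
    rw [he]
    have h2 : Q x ^ (α - 1) = (Q x ^ (1 - α))⁻¹ := by
      rw [← Real.rpow_neg (hQ x), neg_sub]
    rw [h2, div_eq_mul_inv]
    ring
  · have h1 : ∀ a, (Q a / Q x) ^ α = 0 := fun a => by
      rw [← hx, div_zero, Real.zero_rpow hαne]
    simp only [h1, Finset.sum_const, smul_zero, Real.zero_rpow hene, mul_zero]
    rw [← hx, Real.zero_rpow (by intro h; apply hαne; linarith), mul_zero, mul_zero]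

lemma Lalpha_eq (hα : 0 < α ∧ α < 1) (hP : IsPMF P) (hQ : IsPMF Q)
    (hPQ : ∀ x, Q x = 0 → P x = 0) :
    Lalpha α P Q = Real.log (∑ x, Q x ^ α)
      + (α / (1 - α)) * Real.log (∑ x, P x * Q x ^ (α - 1))
      - (1 / (1 - α)) * Real.log (∑ x, P x ^ α) := by
  have h1α : (0:ℝ) < 1 - α := by linarith [hα.2]
  have hc : 0 < ∑ x, Q x ^ α := sum_rpow_pos hα.1 hQ
  have hF : 0 < ∑ x, P x * Q x ^ (α - 1) := F_pos hP hQ.1 hPQ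
  have hsum : (∑ x, P x * (∑ a, (Q a / Q x) ^ α) ^ ((1 - α) / α))
      = (∑ x, Q x ^ α) ^ ((1 - α) / α) * ∑ x, P x * Q x ^ (α - 1) := by
    rw [Finset.mul_sum]
    exact Finset.sum_congr rfl fun x _ => inner_sum_eq hα hQ.1 x
  unfold Lalpha renyiH
  rw [hsum, Real.log_mul (ne_of_gt (Real.rpow_pos_of_pos hc _)) hF.ne',
    Real.log_rpow hc]
  have : α / (1 - α) * ((1 - α) / α) = 1 := by
    rw [div_mul_div_comm, mul_comm α (1 - α)]
    exact div_self (mul_ne_zero h1α.ne' hα.1.ne')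
  rw [mul_add, ← mul_assoc, this, one_mul]

/-- Hölder / Jensen inequality: `∑ P^α ≤ (∑ P Q^(α-1))^α (∑ Q^α)^(1-α)`,
strict if `P ≠ Q`. -/
lemma holder (hα : 0 < α ∧ α < 1) (hP : IsPMF P) (hQ : IsPMF Q)
    (hPQ : ∀ x, Q x = 0 → P x = 0) :
    (∑ x, P x ^ α) ≤ (∑ x, P x * Q x ^ (α - 1)) ^ α * (∑ x, Q x ^ α) ^ (1 - α)
    ∧ (P ≠ Q → (∑ x, P x ^ α) < (∑ x, P x * Q x ^ (α - 1)) ^ α * (∑ x, Q x ^ α) ^ (1 - α)) := by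
  classical
  have h1α : (0:ℝ) < 1 - α := by linarith [hα.2]
  set S := ∑ x, Q x ^ α with hSdef
  have hS : 0 < S := sum_rpow_pos hα.1 hQ
  set s : Finset X := Finset.univ.filter (fun x => 0 < Q x) with hsdef
  have hmem_s : ∀ x, x ∈ s ↔ 0 < Q x := fun x => by simp [hsdef]
  have hQz : ∀ x, x ∉ s → Q x = 0 := fun x hx => by
    by_contra h
    exact hx ((hmem_s x).2 ((hQ.1 x).lt_of_ne (Ne.symm h)))
  have hsumQ : ∑ x ∈ s, Q x ^ α = S := by
    rw [hSdef]
    refine Finset.sum_subset (Finset.subset_univ s) fun x _ hx => ?_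
    rw [hQz x hx, Real.zero_rpow hα.1.ne']
  have hsumP : ∑ x ∈ s, P x ^ α = ∑ x, P x ^ α := by
    refine Finset.sum_subset (Finset.subset_univ s) fun x _ hx => ?_
    rw [hPQ x (hQz x hx), Real.zero_rpow hα.1.ne']
  have hsumT : ∑ x ∈ s, P x * Q x ^ (α - 1) = ∑ x, P x * Q x ^ (α - 1) := by
    refine Finset.sum_subset (Finset.subset_univ s) fun x _ hx => ?_
    rw [hPQ x (hQz x hx), zero_mul]
  have h₀ : ∀ i ∈ s, 0 < Q i ^ α / S := fun i hi =>
    div_pos (Real.rpow_pos_of_pos ((hmem_s i).1 hi) α) hS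
  have h₁ : ∑ i ∈ s, Q i ^ α / S = 1 := by
    rw [← Finset.sum_div, hsumQ, div_self hS.ne']
  have hmemIci : ∀ i ∈ s, P i / Q i ∈ Set.Ici (0:ℝ) := fun i hi =>
    Set.mem_Ici.2 (div_nonneg (hP.1 i) (hQ.1 i))
  have hLHS : ∑ i ∈ s, (Q i ^ α / S) • ((P i / Q i) ^ α) = (∑ x, P x ^ α) / S := by
    rw [← hsumP, Finset.sum_div]
    refine Finset.sum_congr rfl fun i hi => ?_
    have hQi := (hmem_s i).1 hi
    rw [smul_eq_mul, Real.div_rpow (hP.1 i) (hQ.1 i)]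
    have : Q i ^ α ≠ 0 := (Real.rpow_pos_of_pos hQi α).ne'
    field_simp
  have hinner : ∑ i ∈ s, (Q i ^ α / S) • (P i / Q i)
      = (∑ x, P x * Q x ^ (α - 1)) / S := by
    rw [← hsumT, Finset.sum_div]
    refine Finset.sum_congr rfl fun i hi => ?_
    have hQi := (hmem_s i).1 hi
    rw [smul_eq_mul, Real.rpow_sub hQi, Real.rpow_one]
    field_simp
  set T := ∑ x, P x * Q x ^ (α - 1) with hTdef
  have hT : 0 < T := F_pos hP hQ.1 hPQ
  have hfin : ((T / S) ^ α) = T ^ α * S ^ (1-α) / S := by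
    rw [Real.div_rpow hT.le hS.le, Real.rpow_sub hS, Real.rpow_one]
    field_simp
  constructor
  · have hJ := (Real.concaveOn_rpow hα.1.le hα.2.le).le_map_sum
      (fun i hi => (h₀ i hi).le) h₁ hmemIci
    rw [hLHS, hinner, hfin] at hJ
    have := mul_le_mul_of_nonneg_right hJ hS.le
    rwa [div_mul_cancel₀ _ hS.ne', div_mul_cancel₀ _ hS.ne'] at this
  · intro hne
    have hp : ∃ j ∈ s, ∃ k ∈ s, P j / Q j ≠ P k / Q k := by
      by_contra hcon
      push_neg at hcon
      obtain ⟨x₀, hx₀⟩ := exists_pos hP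
      have hQx₀ : 0 < Q x₀ := by
        rcases (hQ.1 x₀).lt_or_eq with h | h
        · exact h
        · exact absurd (hPQ x₀ h.symm) hx₀.ne'
      have hx₀s : x₀ ∈ s := (hmem_s x₀).2 hQx₀
      set c := P x₀ / Q x₀ with hcdef
      have hPc : ∀ x ∈ s, P x = c * Q x := fun x hx => by
        have h := hcon x hx x₀ hx₀s
        have hQx : 0 < Q x := (hmem_s x).1 hx
        rw [div_eq_div_iff hQx.ne' hQx₀.ne'] at h
        rw [hcdef]
        field_simp
        linarith [h]
      have hsum1 : ∑ x ∈ s, P x = 1 := by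
        rw [← hP.2]
        exact Finset.sum_subset (Finset.subset_univ s) fun x _ hx => hPQ x (hQz x hx)
      have hsumQ1 : ∑ x ∈ s, Q x = 1 := by
        rw [← hQ.2]
        exact Finset.sum_subset (Finset.subset_univ s) fun x _ hx => hQz x hx
      have hc1 : c = 1 := by
        have : ∑ x ∈ s, P x = c * ∑ x ∈ s, Q x := by
          rw [Finset.mul_sum]
          exact Finset.sum_congr rfl hPc
        rw [hsum1, hsumQ1, mul_one] at this
        exact this.symm
      apply hne
      funext x
      by_cases hx : x ∈ s
      · rw [hPc x hx, hc1, one_mul]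
      · rw [hPQ x (hQz x hx), hQz x hx]
    have hJ := (Real.strictConcaveOn_rpow hα.1 hα.2).lt_map_sum h₀ h₁ hmemIci hp
    rw [hLHS, hinner, hfin] at hJ
    have := mul_lt_mul_of_pos_right hJ hS
    rwa [div_mul_cancel₀ _ hS.ne', div_mul_cancel₀ _ hS.ne'] at this

lemma Lalpha_nonneg_aux (hα : 0 < α ∧ α < 1) (hP : IsPMF P) (hQ : IsPMF Q)
    (hPQ : ∀ x, Q x = 0 → P x = 0) :
    0 ≤ Lalpha α P Q ∧ (P ≠ Q → 0 < Lalpha α P Q) := by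
  have h1α : (0:ℝ) < 1 - α := by linarith [hα.2]
  have hG : 0 < ∑ x, P x ^ α := sum_rpow_pos hα.1 hP
  have hS : 0 < ∑ x, Q x ^ α := sum_rpow_pos hα.1 hQ
  have hT : 0 < ∑ x, P x * Q x ^ (α - 1) := F_pos hP hQ.1 hPQ
  have hlogmul : Real.log ((∑ x, P x * Q x ^ (α - 1)) ^ α * (∑ x, Q x ^ α) ^ (1 - α))
      = α * Real.log (∑ x, P x * Q x ^ (α - 1)) + (1 - α) * Real.log (∑ x, Q x ^ α) := by
    rw [Real.log_mul (Real.rpow_pos_of_pos hT α).ne' (Real.rpow_pos_of_pos hS _).ne',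
      Real.log_rpow hT, Real.log_rpow hS]
  have hid : 1/(1-α)*(α*Real.log (∑ x, P x * Q x ^ (α - 1))
      + (1-α)*Real.log (∑ x, Q x ^ α))
      = α/(1-α)*Real.log (∑ x, P x * Q x ^ (α - 1)) + Real.log (∑ x, Q x ^ α) := by
    field_simp
  have hγ : (0:ℝ) < 1/(1-α) := by positivity
  rw [Lalpha_eq hα hP hQ hPQ]
  constructor
  · have hh := (holder hα hP hQ hPQ).1
    have hlog := Real.log_le_log hG hh
    rw [hlogmul] at hlog
    have h2 := mul_le_mul_of_nonneg_left hlog hγ.le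
    rw [hid] at h2
    linarith
  · intro hne
    have hh := (holder hα hP hQ hPQ).2 hne
    have hlog := Real.log_lt_log hG hh
    rw [hlogmul] at hlog
    have h2 := mul_lt_mul_of_pos_left hlog hγ
    rw [hid] at h2
    linarith

/-- The Pythagorean inequality in real form, given the key linear inequality. -/
lemma pyth_of_key (hα : 0 < α ∧ α < 1) (hP : IsPMF P) (hQ : IsPMF Q) (hR : IsPMF R)
    (hPR : ∀ x, R x = 0 → P x = 0) (hQR : ∀ x, R x = 0 → Q x = 0)
    (hPQ : ∀ x, Q x = 0 → P x = 0)
    (key : (∑ x, P x * Q x ^ (α - 1)) * (∑ x, Q x * R x ^ (α - 1))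
        ≤ (∑ x, P x * R x ^ (α - 1)) * (∑ x, Q x ^ α)) :
    Lalpha α P Q + Lalpha α Q R ≤ Lalpha α P R := by
  have h1α : (0:ℝ) < 1 - α := by linarith [hα.2]
  have hT : 0 < ∑ x, P x * Q x ^ (α - 1) := F_pos hP hQ.1 hPQ
  have hFQ : 0 < ∑ x, Q x * R x ^ (α - 1) := F_pos hQ hR.1 hQR
  have hFP : 0 < ∑ x, P x * R x ^ (α - 1) := F_pos hP hR.1 hPR
  have hGQ : 0 < ∑ x, Q x ^ α := sum_rpow_pos hα.1 hQ
  have hlog : Real.log (∑ x, P x * Q x ^ (α - 1)) + Real.log (∑ x, Q x * R x ^ (α - 1))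
      ≤ Real.log (∑ x, P x * R x ^ (α - 1)) + Real.log (∑ x, Q x ^ α) := by
    rw [← Real.log_mul hT.ne' hFQ.ne', ← Real.log_mul hFP.ne' hGQ.ne']
    exact Real.log_le_log (mul_pos hT hFQ) key
  have hβ : (0:ℝ) ≤ α/(1-α) := div_nonneg hα.1.le h1α.le
  have h3 := mul_le_mul_of_nonneg_left hlog hβ
  rw [mul_add, mul_add] at h3
  have hγ : (1:ℝ)/(1-α) = α/(1-α) + 1 := by
    field_simp
    ring
  rw [Lalpha_eq hα hP hQ hPQ, Lalpha_eq hα hQ hR hQR, Lalpha_eq hα hP hR hPR, hγ]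
  ring_nf
  ring_nf at h3
  linarith

lemma mix_pmf {t : ℝ} (hP : IsPMF P) (hQ : IsPMF Q) (ht : t ∈ Set.Icc (0:ℝ) 1) :
    IsPMF (fun x => (1-t)*Q x + t*P x) := by
  constructor
  · intro x
    exact add_nonneg (mul_nonneg (by linarith [ht.2]) (hQ.1 x)) (mul_nonneg ht.1 (hP.1 x))
  · rw [Finset.sum_add_distrib]
    simp only [← Finset.mul_sum, hP.2, hQ.2]
    ring

lemma mix_suppLe {t : ℝ} (hPR : ∀ x, R x = 0 → P x = 0) (hQR : ∀ x, R x = 0 → Q x = 0) :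
    ∀ x, R x = 0 → (1-t)*Q x + t*P x = 0 := by
  intro x hx
  rw [hPR x hx, hQR x hx]
  ring

lemma mix_F {t : ℝ} :
    ∑ x, ((1-t)*Q x + t*P x) * R x ^ (α-1)
      = (∑ x, Q x * R x ^ (α-1)) + t*((∑ x, P x * R x ^ (α-1)) - ∑ x, Q x * R x ^ (α-1)) := by
  have h : ∀ x, ((1-t)*Q x + t*P x) * R x ^ (α-1)
      = (1-t)*(Q x * R x ^ (α-1)) + t*(P x * R x ^ (α-1)) := fun x => by ring
  simp_rw [h]
  rw [Finset.sum_add_distrib, ← Finset.mul_sum, ← Finset.mul_sum]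
  ring

lemma rpow_sub_one_mul {q : ℝ} (hq : 0 ≤ q) (hα : 0 < α) : q ^ (α-1) * q = q ^ α := by
  rcases hq.lt_or_eq with h | h
  · rw [Real.rpow_sub h, Real.rpow_one, div_mul_cancel₀ _ h.ne']
  · rw [← h, mul_zero, Real.zero_rpow hα.ne']

/-- The derivative (first-order optimality) argument: a minimizer along the
segment towards `P` satisfies the key linear inequality. -/
lemma key_of_min (hα : 0 < α ∧ α < 1) (hP : IsPMF P) (hQ : IsPMF Q) (hR : IsPMF R)
    (hPR : ∀ x, R x = 0 → P x = 0) (hQR : ∀ x, R x = 0 → Q x = 0)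
    (hPQ : ∀ x, Q x = 0 → P x = 0)
    (hmin : ∀ t ∈ Set.Icc (0:ℝ) 1,
      Lalpha α Q R ≤ Lalpha α (fun x => (1-t)*Q x + t*P x) R) :
    (∑ x, P x * Q x ^ (α - 1)) * (∑ x, Q x * R x ^ (α - 1))
      ≤ (∑ x, P x * R x ^ (α - 1)) * (∑ x, Q x ^ α) := by
  have h1α : (0:ℝ) < 1 - α := by linarith [hα.2]
  set FQ := ∑ x, Q x * R x ^ (α-1) with hFQdef
  set FP := ∑ x, P x * R x ^ (α-1) with hFPdef
  set GQ := ∑ x, Q x ^ α with hGQdef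
  set T := ∑ x, P x * Q x ^ (α-1) with hTdef
  have hFQ : 0 < FQ := F_pos hQ hR.1 hQR
  have hFP : 0 < FP := F_pos hP hR.1 hPR
  have hGQ : 0 < GQ := sum_rpow_pos hα.1 hQ
  have hT : 0 < T := F_pos hP hQ.1 hPQ
  set G : ℝ → ℝ := fun t => ∑ x, ((1-t)*Q x + t*P x) ^ α with hGdef
  set g : ℝ → ℝ := fun t => (α/(1-α)) * Real.log (FQ + t*(FP - FQ))
      - (1/(1-α)) * Real.log (G t) with hgdef
  have hG0 : G 0 = GQ := by
    rw [hGdef, hGQdef]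
    refine Finset.sum_congr rfl fun x _ => ?_
    norm_num
  -- monotonicity of g from minimality
  have hgmono : ∀ t ∈ Set.Icc (0:ℝ) 1, g 0 ≤ g t := by
    intro t ht
    have h := hmin t ht
    rw [Lalpha_eq hα hQ hR hQR,
      Lalpha_eq hα (mix_pmf hP hQ ht) hR (mix_suppLe hPR hQR)] at h
    rw [mix_F] at h
    have hGt : (∑ x, ((1-t)*Q x + t*P x) ^ α) = G t := rfl
    rw [hGt, ← hFQdef, ← hFPdef, ← hGQdef] at h
    rw [hgdef]
    simp only
    rw [hG0, zero_mul, add_zero]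
    linarith [h]
  -- derivative of G at 0
  have hterm : ∀ x : X, HasDerivAt (fun t:ℝ => ((1-t)*Q x + t*P x) ^ α)
      ((P x - Q x) * α * Q x ^ (α-1)) 0 := by
    intro x
    have hux : HasDerivAt (fun t:ℝ => (1-t)*Q x + t*P x) (P x - Q x) 0 := by
      have h1 : HasDerivAt (fun t:ℝ => (1-t)*Q x) ((-1) * Q x) 0 :=
        (((hasDerivAt_id (0:ℝ)).const_sub 1)).mul_const (Q x)
      have h2 : HasDerivAt (fun t:ℝ => t*P x) (1 * P x) 0 :=
        (hasDerivAt_id (0:ℝ)).mul_const (P x)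
      have := h1.fun_add h2
      refine this.congr_deriv ?_
      ring
    rcases (hQ.1 x).lt_or_eq with hQx | hQx
    · have hne : (1-(0:ℝ))*Q x + 0*P x ≠ 0 := by
        norm_num
        exact hQx.ne'
      have := hux.rpow_const (p := α) (Or.inl hne)
      convert this using 2
      norm_num
    · have hPx : P x = 0 := hPQ x hQx.symm
      have hfun : (fun t:ℝ => ((1-t)*Q x + t*P x) ^ α) = fun _ => 0 := by
        funext t
        rw [← hQx, hPx]
        norm_num
        exact Real.zero_rpow hα.1.ne'
      rw [hfun, ← hQx, hPx]
      norm_num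
      exact hasDerivAt_const 0 0
  have hGderiv : HasDerivAt G (∑ x, (P x - Q x) * α * Q x ^ (α-1)) 0 :=
    HasDerivAt.fun_sum (fun x _ => hterm x)
  -- derivative of first part
  have hFderiv : HasDerivAt (fun t:ℝ => FQ + t*(FP - FQ)) (FP - FQ) 0 := by
    have := ((hasDerivAt_id (0:ℝ)).mul_const (FP - FQ)).const_add FQ
    simpa using this
  set D := ∑ x, (P x - Q x) * α * Q x ^ (α-1) with hDdef
  have hDeq : D = α * T - α * GQ := by
    rw [hDdef, hTdef, hGQdef, Finset.mul_sum, Finset.mul_sum, ← Finset.sum_sub_distrib]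
    refine Finset.sum_congr rfl fun x _ => ?_
    rw [← rpow_sub_one_mul (hQ.1 x) hα.1]
    ring
  set d := (α/(1-α)) * ((FP - FQ)/FQ) - (1/(1-α)) * (D/GQ) with hddef
  have hgderiv : HasDerivAt g d 0 := by
    have hF0ne : FQ + 0*(FP - FQ) ≠ 0 := by norm_num; exact hFQ.ne'
    have hG0ne : G 0 ≠ 0 := by rw [hG0]; exact hGQ.ne'
    have h1 := (hFderiv.log hF0ne).const_mul (α/(1-α))
    have h2 := (hGderiv.log hG0ne).const_mul (1/(1-α))
    have := h1.fun_sub h2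
    refine this.congr_deriv ?_
    rw [hddef, hG0]
    norm_num
  -- right derivative nonneg
  have hd : 0 ≤ d := by
    have hdw : HasDerivWithinAt g d (Set.Ioi (0:ℝ)) 0 := hgderiv.hasDerivWithinAt
    have hslope := hasDerivWithinAt_iff_tendsto_slope.1 hdw
    rw [Set.diff_singleton_eq_self (by simp)] at hslope
    have hev : ∀ᶠ t in nhdsWithin (0:ℝ) (Set.Ioi 0), 0 ≤ slope g 0 t := by
      filter_upwards [Ioo_mem_nhdsGT_of_mem (Set.left_mem_Ico.2 one_pos)] with t ht
      rw [slope_def_field]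
      apply div_nonneg _ (by linarith [ht.1])
      exact sub_nonneg.2 (hgmono t ⟨ht.1.le, ht.2.le⟩)
    exact ge_of_tendsto hslope hev
  -- conclude
  have hid : (1/(1-α)) * ((α * T - α * GQ)/GQ) = (α/(1-α)) * ((T - GQ)/GQ) := by
    field_simp
  rw [hddef, hDeq, hid] at hd
  have hβ : (0:ℝ) < α/(1-α) := div_pos hα.1 h1α
  have hkey : (T - GQ)/GQ ≤ (FP - FQ)/FQ := by
    have := sub_nonneg.1 hd
    exact le_of_mul_le_mul_left this hβ
  have h8 := (div_le_div_iff₀ hGQ hFQ).1 hkey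
  linarith [h8]

/-- A minimizer along segments must dominate the support of every competitor. -/
lemma suppLe_of_min (hα : 0 < α ∧ α < 1) (hP : IsPMF P) (hQ : IsPMF Q) (hR : IsPMF R)
    (hPR : ∀ x, R x = 0 → P x = 0) (hQR : ∀ x, R x = 0 → Q x = 0)
    (hmin : ∀ t ∈ Set.Icc (0:ℝ) 1,
      Lalpha α Q R ≤ Lalpha α (fun x => (1-t)*Q x + t*P x) R) :
    ∀ x, Q x = 0 → P x = 0 := by
  classical
  intro x₀ hQx₀
  by_contra hPx₀ne
  have hPx₀ : 0 < P x₀ := (hP.1 x₀).lt_of_ne (Ne.symm hPx₀ne)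
  have h1α : (0:ℝ) < 1 - α := by linarith [hα.2]
  set FQ := ∑ x, Q x * R x ^ (α-1) with hFQdef
  set FP := ∑ x, P x * R x ^ (α-1) with hFPdef
  set GQ := ∑ x, Q x ^ α with hGQdef
  have hFQ : 0 < FQ := F_pos hQ hR.1 hQR
  have hFP : 0 < FP := F_pos hP hR.1 hPR
  have hGQ : 0 < GQ := sum_rpow_pos hα.1 hQ
  set A := ∑ x ∈ Finset.univ.filter (fun x => Q x = 0), P x ^ α with hAdef
  have hA : 0 < A := by
    have hx₀mem : x₀ ∈ Finset.univ.filter (fun x => Q x = 0) := by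
      simp [hQx₀]
    refine lt_of_lt_of_le (Real.rpow_pos_of_pos hPx₀ α) ?_
    exact Finset.single_le_sum (fun x _ => Real.rpow_nonneg (hP.1 x) α) hx₀mem
  set a := A / GQ with hadef
  have ha : 0 < a := div_pos hA hGQ
  set C := |FP - FQ| with hCdef
  set K := (α/(1-α)) * C / FQ with hKdef
  have hK : 0 ≤ K := by
    apply div_nonneg _ hFQ.le
    exact mul_nonneg (div_nonneg hα.1.le h1α.le) (abs_nonneg _)
  have hγpos : (0:ℝ) < 1/(1-α) := by positivity
  -- the limiting argument: find a small t
  have htt : Filter.Tendsto (fun t:ℝ => t ^ (α-1)) (nhdsWithin 0 (Set.Ioi 0))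
      Filter.atTop := by
    have h1 : Filter.Tendsto (fun t:ℝ => (α-1) * Real.log t)
        (nhdsWithin 0 (Set.Ioi 0)) Filter.atTop :=
      Filter.Tendsto.const_mul_atBot_of_neg (by linarith)
        Real.tendsto_log_nhdsGT_zero
    have h2 := Real.tendsto_exp_atTop.comp h1
    apply h2.congr'
    filter_upwards [self_mem_nhdsWithin] with t ht
    rw [Function.comp_apply, Real.rpow_def_of_pos ht, mul_comm]
  have hnum : Filter.Tendsto (fun t:ℝ => (1/(1-α)) * (a * t^(α-1) - 1))
      (nhdsWithin 0 (Set.Ioi 0)) Filter.atTop := by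
    apply Filter.Tendsto.const_mul_atTop hγpos
    have := (htt.const_mul_atTop ha)
    exact Filter.tendsto_atTop_add_const_right _ (-1) this |>.congr (fun t => by ring)
  have hta : Filter.Tendsto (fun t:ℝ => t ^ α) (nhdsWithin 0 (Set.Ioi 0)) (nhds 0) := by
    have hc : ContinuousAt (fun t:ℝ => t ^ α) 0 :=
      Real.continuousAt_rpow_const 0 α (Or.inr hα.1.le)
    have := hc.tendsto.mono_left (nhdsWithin_le_nhds (s := Set.Ioi (0:ℝ)))
    rwa [Real.zero_rpow hα.1.ne'] at this
  have hid0 : Filter.Tendsto (fun t:ℝ => t) (nhdsWithin 0 (Set.Ioi 0)) (nhds 0) :=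
    (continuous_id.tendsto 0).mono_left (nhdsWithin_le_nhds (s := Set.Ioi (0:ℝ)))
  have hden : Filter.Tendsto (fun t:ℝ => 1 - t + a * t ^ α)
      (nhdsWithin 0 (Set.Ioi 0)) (nhds 1) := by
    have := (tendsto_const_nhds (x := (1:ℝ)).sub hid0).add (hta.const_mul a)
    simpa using this
  have hinv : Filter.Tendsto (fun t:ℝ => (1 - t + a * t ^ α)⁻¹)
      (nhdsWithin 0 (Set.Ioi 0)) (nhds 1) := by
    have := hden.inv₀ one_ne_zero
    simpa using this
  have hquot : Filter.Tendsto
      (fun t:ℝ => (1 - t + a * t ^ α)⁻¹ * ((1/(1-α)) * (a * t^(α-1) - 1)))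
      (nhdsWithin 0 (Set.Ioi 0)) Filter.atTop :=
    Filter.Tendsto.pos_mul_atTop one_pos hinv hnum
  have hev := hquot.eventually_gt_atTop K
  obtain ⟨t, hKt, ht01⟩ :=
    (hev.and (Ioo_mem_nhdsGT_of_mem (Set.left_mem_Ico.2 one_pos))).exists
  obtain ⟨ht0, ht1⟩ := ht01
  -- now derive the contradiction
  set D := 1 - t + a * t ^ α with hDdef
  have hD : 0 < D := by
    have h1 : 0 < 1 - t := by linarith
    have h2 : 0 ≤ a * t ^ α := mul_nonneg ha.le (Real.rpow_nonneg ht0.le α)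
    linarith
  set GPt := ∑ x, ((1-t)*Q x + t*P x) ^ α with hGPtdef
  have hGPt_lb : (1-t)*GQ + t^α * A ≤ GPt := by
    rw [hGPtdef, ← Finset.sum_filter_add_sum_filter_not Finset.univ (fun x => Q x = 0)]
    have h_first : ∑ x ∈ Finset.univ.filter (fun x => Q x = 0), ((1-t)*Q x + t*P x)^α
        = t^α * A := by
      rw [hAdef, Finset.mul_sum]
      refine Finset.sum_congr rfl fun x hx => ?_
      have hQx : Q x = 0 := (Finset.mem_filter.1 hx).2
      rw [hQx, mul_zero, zero_add, Real.mul_rpow ht0.le (hP.1 x)]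
    have h_second : (1-t)*GQ ≤
        ∑ x ∈ Finset.univ.filter (fun x => ¬(Q x = 0)), ((1-t)*Q x + t*P x)^α := by
      have step1 : (1-t)^α * GQ = ∑ x, ((1-t)*Q x)^α := by
        rw [hGQdef, Finset.mul_sum]
        refine Finset.sum_congr rfl fun x _ => ?_
        rw [Real.mul_rpow (by linarith : (0:ℝ) ≤ 1-t) (hQ.1 x)]
      have step2 : (∑ x, ((1-t)*Q x)^α)
          = ∑ x ∈ Finset.univ.filter (fun x => ¬(Q x = 0)), ((1-t)*Q x)^α := by
        symm
        refine Finset.sum_subset (Finset.filter_subset _ _) fun x _ hx => ?_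
        have hQx : Q x = 0 := by
          by_contra h
          exact hx (Finset.mem_filter.2 ⟨Finset.mem_univ x, h⟩)
        rw [hQx, mul_zero, Real.zero_rpow hα.1.ne']
      have step3 : ∑ x ∈ Finset.univ.filter (fun x => ¬(Q x = 0)), ((1-t)*Q x)^α
          ≤ ∑ x ∈ Finset.univ.filter (fun x => ¬(Q x = 0)), ((1-t)*Q x + t*P x)^α := by
        refine Finset.sum_le_sum fun x _ => ?_
        apply Real.rpow_le_rpow (mul_nonneg (by linarith) (hQ.1 x)) _ hα.1.le
        have : 0 ≤ t * P x := mul_nonneg ht0.le (hP.1 x)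
        linarith
      have step4 : (1-t)*GQ ≤ (1-t)^α * GQ := by
        apply mul_le_mul_of_nonneg_right _ hGQ.le
        have := Real.rpow_le_rpow_of_exponent_ge (by linarith : (0:ℝ) < 1-t)
          (by linarith : (1:ℝ)-t ≤ 1) hα.2.le
        rwa [Real.rpow_one] at this
      calc (1-t)*GQ ≤ (1-t)^α * GQ := step4
        _ = ∑ x, ((1-t)*Q x)^α := step1
        _ = _ := step2
        _ ≤ _ := step3
    linarith
  have hGPt_pos : 0 < GPt := by
    have h1 : 0 < (1-t)*GQ := mul_pos (by linarith) hGQ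
    have h2 : 0 ≤ t^α * A := mul_nonneg (Real.rpow_nonneg ht0.le α) hA.le
    linarith
  -- the minimality inequality at t
  have h := hmin t ⟨ht0.le, ht1.le⟩
  rw [Lalpha_eq hα hQ hR hQR,
    Lalpha_eq hα (mix_pmf hP hQ ⟨ht0.le, ht1.le⟩) hR (mix_suppLe hPR hQR)] at h
  rw [mix_F] at h
  have hGt : (∑ x, ((1-t)*Q x + t*P x) ^ α) = GPt := rfl
  rw [hGt, ← hFQdef, ← hFPdef, ← hGQdef] at h
  -- bound the right side
  have hFt : 0 < FQ + t*(FP - FQ) := by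
    have : FQ + t*(FP-FQ) = (1-t)*FQ + t*FP := by ring
    rw [this]
    exact add_pos (mul_pos (by linarith) hFQ) (mul_pos ht0 hFP)
  have hRHS : Real.log (FQ + t*(FP - FQ)) - Real.log FQ ≤ t*C/FQ := by
    rw [← Real.log_div hFt.ne' hFQ.ne']
    have h1 := Real.log_le_sub_one_of_pos (div_pos hFt hFQ)
    have h2 : (FQ + t*(FP - FQ))/FQ - 1 = t*(FP-FQ)/FQ := by
      field_simp
      ring
    have h3 : t*(FP-FQ)/FQ ≤ t*C/FQ := by
      gcongr
      exact le_abs_self _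
    linarith
  -- bound the left side
  have hDle : D ≤ GPt/GQ := by
    rw [hDdef]
    have heq : GPt/GQ - (1 - t + a*t^α) = (GPt - ((1-t)*GQ + t^α*A))/GQ := by
      rw [hadef]
      field_simp
    have h5 : 0 ≤ (GPt - ((1-t)*GQ + t^α*A))/GQ := div_nonneg (by linarith) hGQ.le
    linarith [heq ▸ h5]
  have hLHS : 1 - D⁻¹ ≤ Real.log GPt - Real.log GQ := by
    rw [← Real.log_div hGPt_pos.ne' hGQ.ne']
    have h1 : Real.log D ≤ Real.log (GPt/GQ) :=
      Real.log_le_log hD hDle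
    have h2 : Real.log D⁻¹ ≤ D⁻¹ - 1 :=
      Real.log_le_sub_one_of_pos (inv_pos.2 hD)
    rw [Real.log_inv] at h2
    linarith
  -- combine with the minimality inequality
  have hcomb : (1/(1-α)) * (1 - D⁻¹) ≤ (α/(1-α)) * (t*C/FQ) := by
    have hL := mul_le_mul_of_nonneg_left hLHS hγpos.le
    have hRr := mul_le_mul_of_nonneg_left hRHS (div_nonneg hα.1.le h1α.le)
    nlinarith [h, hL, hRr]
  -- and the chosen t gives the reverse strict inequality
  have htpow : t^(α-1) * t = t^α := rpow_sub_one_mul ht0.le hα.1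
  have h1mD : 1 - D⁻¹ = (a*t^α - t) * D⁻¹ := by
    rw [hDdef]
    field_simp
    ring
  have hKt2 : K * t < (1/(1-α)) * (1 - D⁻¹) := by
    have := mul_lt_mul_of_pos_right hKt ht0
    have heq : D⁻¹ * ((1/(1-α)) * (a * t^(α-1) - 1)) * t
        = (1/(1-α)) * ((a*t^α - t) * D⁻¹) := by
      rw [← htpow]
      ring
    rw [heq] at this
    rw [h1mD]
    exact this
  have hKt3 : (α/(1-α)) * (t*C/FQ) = K * t := by
    rw [hKdef]
    ring
  rw [hKt3] at hcomb
  linarith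

end Aux

/-- projection theorem: if `Q ∈ E` with `L_α(Q,R) < ∞` satisfies
the Pythagorean inequality `L_α(P,R) ≥ L_α(P,Q) + L_α(Q,R)` for all `P ∈ E`,
then `Q` is the unique minimizer of `L_α(·,R)` over the convex set `E`;
conversely every minimizer satisfies this inequality. -/
theorem Lalpha_projection_characterization
    {X : Type*} [Fintype X] [Nonempty X]
    (α : ℝ) (hα : 0 < α ∧ α < 1)
    (E : Set (X → ℝ)) (hEconvex : Convex ℝ E) (hEpmf : ∀ P ∈ E, IsPMF P)
    (R : X → ℝ) (hR : IsPMF R) :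
    (∀ Q ∈ E, Lext α Q R < ⊤ →
      (∀ P ∈ E, Lext α P R ≥ Lext α P Q + Lext α Q R) →
      (∀ P ∈ E, Lext α Q R ≤ Lext α P R) ∧
      (∀ P ∈ E, (∀ P' ∈ E, Lext α P R ≤ Lext α P' R) → P = Q))
    ∧ (∀ Q ∈ E, Lext α Q R < ⊤ →
        (∀ P ∈ E, Lext α Q R ≤ Lext α P R) →
        ∀ P ∈ E, Lext α P R ≥ Lext α P Q + Lext α Q R) := by
  constructor
  · -- direct part
    intro Q hQE hQtop hPy
    have hQpmf := hEpmf Q hQE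
    have hQR : ∀ x, R x = 0 → Q x = 0 := by
      by_contra hc
      rw [Lext, if_neg hc] at hQtop
      exact absurd hQtop (lt_irrefl ⊤)
    have hQRe : Lext α Q R = ((Lalpha α Q R : ℝ) : EReal) := by rw [Lext, if_pos hQR]
    have hminQ : ∀ P ∈ E, Lext α Q R ≤ Lext α P R := by
      intro P hPE
      have hPpmf := hEpmf P hPE
      have h := hPy P hPE
      by_cases hPQ : ∀ x, Q x = 0 → P x = 0
      · have hPQe : Lext α P Q = ((Lalpha α P Q : ℝ):EReal) := by rw [Lext, if_pos hPQ]
        have hnn : (0:ℝ) ≤ Lalpha α P Q := (Lalpha_nonneg_aux hα hPpmf hQpmf hPQ).1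
        rw [hPQe, hQRe] at h
        rw [hQRe]
        calc ((Lalpha α Q R : ℝ):EReal)
            ≤ ((Lalpha α P Q + Lalpha α Q R : ℝ):EReal) := by
              exact_mod_cast EReal.coe_le_coe_iff.2 (by linarith)
          _ = ((Lalpha α P Q:ℝ):EReal) + ((Lalpha α Q R:ℝ):EReal) := EReal.coe_add _ _
          _ ≤ Lext α P R := h
      · have hPQtop : Lext α P Q = ⊤ := by rw [Lext, if_neg hPQ]
        rw [hPQtop, hQRe, EReal.top_add_coe] at h
        rw [top_le_iff.1 h]
        exact le_top
    refine ⟨hminQ, ?_⟩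
    intro P hPE hminP
    have hPpmf := hEpmf P hPE
    have h1 := hminP Q hQE
    rw [hQRe] at h1
    have hPRtop : Lext α P R < ⊤ := lt_of_le_of_lt h1 (EReal.coe_lt_top _)
    have hPR : ∀ x, R x = 0 → P x = 0 := by
      by_contra hc
      rw [Lext, if_neg hc] at hPRtop
      exact absurd hPRtop (lt_irrefl _)
    have hPRe : Lext α P R = ((Lalpha α P R:ℝ):EReal) := by rw [Lext, if_pos hPR]
    have h3 := hminQ P hPE
    rw [hPRe, hQRe] at h3
    rw [hPRe] at h1
    have heq : Lalpha α P R = Lalpha α Q R :=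
      le_antisymm (EReal.coe_le_coe_iff.1 h1) (EReal.coe_le_coe_iff.1 h3)
    have h4 := hPy P hPE
    by_cases hPQ : ∀ x, Q x = 0 → P x = 0
    · by_contra hne
      have hpos := (Lalpha_nonneg_aux hα hPpmf hQpmf hPQ).2 hne
      have hPQe : Lext α P Q = ((Lalpha α P Q:ℝ):EReal) := by rw [Lext, if_pos hPQ]
      rw [hPQe, hQRe, hPRe, ← EReal.coe_add] at h4
      have := EReal.coe_le_coe_iff.1 h4
      linarith [heq ▸ this]
    · have hPQe : Lext α P Q = ⊤ := by rw [Lext, if_neg hPQ]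
      rw [hPQe, hQRe, EReal.top_add_coe] at h4
      rw [top_le_iff.1 h4] at hPRtop
      exact absurd hPRtop (lt_irrefl _)
  · -- converse part
    intro Q hQE hQtop hmin P hPE
    have hQpmf := hEpmf Q hQE
    have hPpmf := hEpmf P hPE
    have hQR : ∀ x, R x = 0 → Q x = 0 := by
      by_contra hc
      rw [Lext, if_neg hc] at hQtop
      exact absurd hQtop (lt_irrefl ⊤)
    by_cases hPR : ∀ x, R x = 0 → P x = 0
    · have hminSeg : ∀ t ∈ Set.Icc (0:ℝ) 1,
          Lalpha α Q R ≤ Lalpha α (fun x => (1-t)*Q x + t*P x) R := by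
        intro t ht
        have hmem : (fun x => (1-t)*Q x + t*P x) ∈ E := by
          have hmem' := hEconvex hQE hPE (by linarith [ht.2] : (0:ℝ) ≤ 1-t) ht.1
            (by ring : (1-t) + t = 1)
          have heqf : (fun x => (1-t)*Q x + t*P x) = (1-t) • Q + t • P := by
            funext x
            simp [Pi.add_apply, Pi.smul_apply, smul_eq_mul]
          rw [heqf]
          exact hmem'
        have h := hmin _ hmem
        have e1 : Lext α Q R = ((Lalpha α Q R:ℝ):EReal) := by rw [Lext, if_pos hQR]
        have e2 : Lext α (fun x => (1-t)*Q x + t*P x) R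
            = ((Lalpha α (fun x => (1-t)*Q x + t*P x) R:ℝ):EReal) := by
          rw [Lext, if_pos (mix_suppLe hPR hQR)]
        rw [e1, e2] at h
        exact EReal.coe_le_coe_iff.1 h
      have hPQ := suppLe_of_min hα hPpmf hQpmf hR hPR hQR hminSeg
      have key := key_of_min hα hPpmf hQpmf hR hPR hQR hPQ hminSeg
      have final := pyth_of_key hα hPpmf hQpmf hR hPR hQR hPQ key
      have e1 : Lext α Q R = ((Lalpha α Q R:ℝ):EReal) := by rw [Lext, if_pos hQR]
      have e2 : Lext α P R = ((Lalpha α P R:ℝ):EReal) := by rw [Lext, if_pos hPR]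
      have e3 : Lext α P Q = ((Lalpha α P Q:ℝ):EReal) := by rw [Lext, if_pos hPQ]
      rw [e1, e2, e3, ← EReal.coe_add]
      exact EReal.coe_le_coe_iff.2 final
    · have e2 : Lext α P R = ⊤ := by rw [Lext, if_neg hPR]
      rw [ge_iff_le, e2]
      exact le_top
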